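/- In the complete bipartite graph K_{4,4} there is a proper edge coloring with 4 colors, but no proper edge coloring of K_{4,4} with 4 colors can make every 4-cycle use 4 distinct edge colors; that is, for every proper 4-edge-coloring of K_{4,4} there exists a 4-cycle on which some color appears twice. -/

import Mathlib

/-- `ce` is a proper edge coloring of `G` with colors `{0, …, n-1}`. -/
def IsProperEC {V : Type*} (G : SimpleGraph V) (n : ℕ) (ce : V → V → ℕ) : Prop :=
  (∀ u v, G.Adj u v → ce u v < n) ∧
  (∀ u v, G.Adj u v → ce u v = ce v u) ∧
  (∀ u v w, G.Adj u v → G.Adj u w → v ≠ w → ce u v ≠ ce u w)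

/-- The complete bipartite graph `K_{4,4}`. -/
def K44 : SimpleGraph (Fin 4 ⊕ Fin 4) := completeBipartiteGraph (Fin 4) (Fin 4)

def myce : (Fin 4 ⊕ Fin 4) → (Fin 4 ⊕ Fin 4) → ℕ
  | Sum.inl i, Sum.inr j => ((i : ℕ) + j) % 4
  | Sum.inr j, Sum.inl i => ((i : ℕ) + j) % 4
  | _, _ => 0

instance : DecidableRel K44.Adj := fun u v =>
  decidable_of_iff ((u.isLeft ∧ v.isRight) ∨ (u.isRight ∧ v.isLeft)) (by simp [K44])

theorem stmt19 :
    (∃ ce, IsProperEC K44 4 ce) ∧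
    ∀ ce, IsProperEC K44 4 ce →
      ∃ a b c d, K44.Adj a b ∧ K44.Adj b c ∧ K44.Adj c d ∧ K44.Adj d a ∧
        a ≠ c ∧ b ≠ d ∧
        ¬ ([ce a b, ce b c, ce c d, ce d a].Pairwise (· ≠ ·)) := by
  constructor
  · exact ⟨myce, ⟨by decide, by decide, by decide⟩⟩
  · rintro ce ⟨h1, h2, h3⟩
    have adj : ∀ (i j : Fin 4), K44.Adj (Sum.inl i) (Sum.inr j) := by
      intro i j; simp [K44]
    -- colors at inl 1 form an injective map Fin 4 → Fin 4, hence surjective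
    have binj : Function.Injective
        (fun j : Fin 4 => (⟨ce (Sum.inl 1) (Sum.inr j),
          h1 _ _ (adj 1 j)⟩ : Fin 4)) := by
      intro j j' h
      by_contra hne
      exact h3 (Sum.inl 1) (Sum.inr j) (Sum.inr j') (adj 1 j) (adj 1 j')
        (by simpa using hne) (by simpa using congrArg Fin.val h)
    have bsurj := Finite.surjective_of_injective binj
    have ha0 : ce (Sum.inl 0) (Sum.inr 0) < 4 := h1 _ _ (adj 0 0)
    obtain ⟨j, hj⟩ := bsurj ⟨ce (Sum.inl 0) (Sum.inr 0), ha0⟩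
    have hj' : ce (Sum.inl 1) (Sum.inr j) = ce (Sum.inl 0) (Sum.inr 0) :=
      congrArg Fin.val hj
    have hne : ce (Sum.inl 1) (Sum.inr 0) ≠ ce (Sum.inl 0) (Sum.inr 0) := by
      have := h3 (Sum.inr 0) (Sum.inl 1) (Sum.inl 0) (K44.adj_symm (adj 1 0))
        (K44.adj_symm (adj 0 0)) (by simp)
      rw [← h2 _ _ (adj 1 0), ← h2 _ _ (adj 0 0)] at this
      exact this
    have hj0 : j ≠ 0 := by rintro rfl; exact hne hj'
    refine ⟨Sum.inl 0, Sum.inr 0, Sum.inl 1, Sum.inr j,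
      adj 0 0, K44.adj_symm (adj 1 0), adj 1 j, K44.adj_symm (adj 0 j),
      by simp, by simpa using hj0.symm, ?_⟩
    intro hpw
    have := (List.pairwise_cons.mp hpw).1 (ce (Sum.inl 1) (Sum.inr j)) (by simp)
    exact this hj'.symm
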